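/- Let i ∈ [m] and let h_i ∈ ℝ^X be the vector with (h_i)_x = √(w(x)) if x ∈ C_i and 0 otherwise. Then for every nonnegative integer t with t·α ≤ 1: (a) for every x ∈ C_i, (1 − t·α)·√(w(x)) ≤ (((1/2)·I_N + (1/2)·Ā)^t h_i)_x ≤ √(w(x)); and (b) for every x ∉ C_i, 0 ≤ (((1/2)·I_N + (1/2)·Ā)^t h_i)_x ≤ t·α·√(w(x)). -/

import Mathlib

open Finset Matrix

/-- The degree `w(x) = ∑_{x'} w(x,x')` of a vertex in the positive-pair graph. -/
noncomputable def deg {N : ℕ} (w : Fin N → Fin N → ℝ) (x : Fin N) : ℝ := ∑ x', w x x'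

/-- The normalized adjacency matrix `Ā` with entries `w(x,x')/√(w(x)w(x'))`. -/
noncomputable def nadj {N : ℕ} (w : Fin N → Fin N → ℝ) : Matrix (Fin N) (Fin N) ℝ :=
  Matrix.of fun x x' => w x x' / Real.sqrt (deg w x * deg w x')

/-- The vector with entry `√(w(x))` on a subset `A` and `0` elsewhere. -/
noncomputable def hvec {N : ℕ} (w : Fin N → Fin N → ℝ) (A : Finset (Fin N)) :
    Fin N → ℝ :=
  fun x => if x ∈ A then Real.sqrt (deg w x) else 0

/-- The lazy random-walk matrix `(1/2)·I + (1/2)·Ā`. -/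
noncomputable def lazyA {N : ℕ} (w : Fin N → Fin N → ℝ) : Matrix (Fin N) (Fin N) ℝ :=
  ((1 : ℝ) / 2) • (1 : Matrix (Fin N) (Fin N) ℝ) + ((1 : ℝ) / 2) • nadj w

/-! With `s = (√w(x))ₓ` we have `Ā s = s`, so `s` is a fixed vector of the entrywise
nonnegative lazy matrix `M`. Hence `M^t` preserves the order interval `[0, s]`, which contains
`h_i`, and applying `M` to a vector bounded in absolute value by `c s` keeps it bounded by `c s`.
One step moves `h_i` by at most `α s`: the weight crossing the boundary of `C_i` is at most
`α w(x)` from either side (from outside because `x` lies in another cluster). Telescoping gives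
`|M^t h_i - h_i| ≤ t α s`, which is both bounds. -/

namespace Matrix

variable {n : Type*} [Fintype n] {M : Matrix n n ℝ}

theorem mulVec_mono_of_nonneg (hM : ∀ i j, 0 ≤ M i j) {u v : n → ℝ} (huv : u ≤ v) :
    M *ᵥ u ≤ M *ᵥ v := fun i =>
  Finset.sum_le_sum fun j _ => mul_le_mul_of_nonneg_left (huv j) (hM i j)

theorem abs_mulVec_le_mulVec_abs (hM : ∀ i j, 0 ≤ M i j) (v : n → ℝ) :
    |M *ᵥ v| ≤ M *ᵥ |v| := fun i => by
  simpa only [Pi.abs_apply, mulVec, dotProduct, abs_mul, abs_of_nonneg (hM i _)]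
    using Finset.abs_sum_le_sum_abs (fun j => M i j * v j) Finset.univ

variable [DecidableEq n] {s : n → ℝ}

theorem pow_mulVec_mem_Icc_of_mulVec_eq_self (hM : ∀ i j, 0 ≤ M i j) (hs : M *ᵥ s = s)
    {v : n → ℝ} (hv : v ∈ Set.Icc 0 s) (t : ℕ) : (M ^ t) *ᵥ v ∈ Set.Icc 0 s := by
  induction t with
  | zero => simpa only [pow_zero, one_mulVec] using hv
  | succ t ih =>
    rw [pow_succ', ← mulVec_mulVec]
    refine ⟨?_, ?_⟩
    · simpa only [mulVec_zero] using mulVec_mono_of_nonneg hM ih.1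
    · simpa only [hs] using mulVec_mono_of_nonneg hM ih.2

theorem abs_pow_mulVec_sub_le (hM : ∀ i j, 0 ≤ M i j) (hs : M *ᵥ s = s) {h : n → ℝ} {ε : ℝ}
    (hstep : |M *ᵥ h - h| ≤ ε • s) (t : ℕ) : |(M ^ t) *ᵥ h - h| ≤ (t * ε) • s := by
  induction t with
  | zero => simp
  | succ t ih =>
    have hsplit : (M ^ (t + 1)) *ᵥ h - h = M *ᵥ ((M ^ t) *ᵥ h - h) + (M *ᵥ h - h) := by
      rw [pow_succ', ← mulVec_mulVec, mulVec_sub]; abel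
    calc |(M ^ (t + 1)) *ᵥ h - h|
        ≤ |M *ᵥ ((M ^ t) *ᵥ h - h)| + |M *ᵥ h - h| := hsplit ▸ abs_add_le _ _
      _ ≤ M *ᵥ ((t * ε) • s) + ε • s :=
          add_le_add ((abs_mulVec_le_mulVec_abs hM _).trans (mulVec_mono_of_nonneg hM ih)) hstep
      _ = ((t + 1 : ℕ) * ε) • s := by rw [mulVec_smul, hs, ← add_smul]; push_cast; ring_nf

end Matrix

section NormalizedAdjacency

variable {N : ℕ} {w : Fin N → Fin N → ℝ}

noncomputable def sqrtDeg (w : Fin N → Fin N → ℝ) : Fin N → ℝ := fun x => √(deg w x)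

theorem hvec_univ : hvec w Finset.univ = sqrtDeg w := by
  ext x; simp [hvec, sqrtDeg]

theorem hvec_mem_Icc (A : Finset (Fin N)) : hvec w A ∈ Set.Icc 0 (sqrtDeg w) := by
  refine ⟨fun x => ?_, fun x => ?_⟩ <;> by_cases hx : x ∈ A <;>
    simp [hvec, sqrtDeg, hx, Real.sqrt_nonneg]

theorem nadj_nonneg (hnonneg : ∀ x x', 0 ≤ w x x') (x x' : Fin N) : 0 ≤ nadj w x x' :=
  div_nonneg (hnonneg x x') (Real.sqrt_nonneg _)

theorem lazyA_nonneg (hnonneg : ∀ x x', 0 ≤ w x x') (x x' : Fin N) : 0 ≤ lazyA w x x' := by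
  simp only [lazyA, Matrix.add_apply, Matrix.smul_apply, smul_eq_mul]
  have hnadj := nadj_nonneg hnonneg x x'
  have hone := zero_le_one_elem (α := ℝ) x x'
  positivity

theorem lazyA_mulVec (v : Fin N → ℝ) :
    lazyA w *ᵥ v = (1 / 2 : ℝ) • v + (1 / 2 : ℝ) • (nadj w *ᵥ v) := by
  rw [lazyA, add_mulVec, smul_mulVec, smul_mulVec, one_mulVec]

theorem nadj_mulVec_hvec_apply (hdeg : ∀ x, 0 < deg w x) (A : Finset (Fin N)) (x : Fin N) :
    (nadj w *ᵥ hvec w A) x = (∑ x' ∈ A, w x x') / sqrtDeg w x := by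
  have hcancel : ∀ x', w x x' / √(deg w x * deg w x') * √(deg w x') = w x x' / √(deg w x) :=
    fun x' => by
      rw [Real.sqrt_mul (hdeg x).le, ← div_div, div_mul_cancel₀ _ (Real.sqrt_pos.2 (hdeg x')).ne']
  simp only [mulVec, dotProduct, nadj, hvec, of_apply, mul_ite, mul_zero, Finset.sum_ite_mem,
    Finset.univ_inter, hcancel, sqrtDeg, Finset.sum_div]

theorem nadj_mulVec_sqrtDeg (hdeg : ∀ x, 0 < deg w x) : nadj w *ᵥ sqrtDeg w = sqrtDeg w := by
  ext x
  rw [← hvec_univ, nadj_mulVec_hvec_apply hdeg, hvec_univ]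
  exact Real.div_sqrt

theorem lazyA_mulVec_sqrtDeg (hdeg : ∀ x, 0 < deg w x) : lazyA w *ᵥ sqrtDeg w = sqrtDeg w := by
  rw [lazyA_mulVec, nadj_mulVec_sqrtDeg hdeg, ← add_smul]; norm_num

theorem abs_nadj_mulVec_hvec_sub_le (hnonneg : ∀ x x', 0 ≤ w x x') (hdeg : ∀ x, 0 < deg w x)
    {A : Finset (Fin N)} {α : ℝ} (hin : ∀ x ∈ A, ∑ x' ∈ Aᶜ, w x x' ≤ α * deg w x)
    (hout : ∀ x ∉ A, ∑ x' ∈ A, w x x' ≤ α * deg w x) :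
    |nadj w *ᵥ hvec w A - hvec w A| ≤ α • sqrtDeg w := by
  intro x
  have hs : 0 < sqrtDeg w x := Real.sqrt_pos.2 (hdeg x)
  have hα : α * sqrtDeg w x = α * deg w x / sqrtDeg w x := by
    rw [mul_div_assoc, sqrtDeg, Real.div_sqrt]
  have hwt : ∀ B : Finset (Fin N), 0 ≤ ∑ x' ∈ B, w x x' := fun B =>
    sum_nonneg fun x' _ => hnonneg x x'
  simp only [Pi.abs_apply, Pi.sub_apply, Pi.smul_apply, smul_eq_mul, nadj_mulVec_hvec_apply hdeg,
    hα]
  by_cases hx : x ∈ A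
  · have hsplit : ∑ x' ∈ A, w x x' = deg w x - ∑ x' ∈ Aᶜ, w x x' := by
      rw [deg, ← Finset.sum_add_sum_compl A]; ring
    have hhx : hvec w A x = deg w x / sqrtDeg w x := by simp [hvec, hx, sqrtDeg, Real.div_sqrt]
    rw [hhx, ← sub_div, hsplit, sub_sub_cancel_left, abs_div, abs_neg, abs_of_pos hs,
      abs_of_nonneg (hwt _)]
    gcongr; exact hin x hx
  · rw [show hvec w A x = 0 by simp [hvec, hx], sub_zero, abs_div, abs_of_pos hs,
      abs_of_nonneg (hwt _)]
    gcongr; exact hout x hx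

theorem abs_lazyA_mulVec_hvec_sub_le (hnonneg : ∀ x x', 0 ≤ w x x') (hdeg : ∀ x, 0 < deg w x)
    {A : Finset (Fin N)} {α : ℝ} (hin : ∀ x ∈ A, ∑ x' ∈ Aᶜ, w x x' ≤ α * deg w x)
    (hout : ∀ x ∉ A, ∑ x' ∈ A, w x x' ≤ α * deg w x) :
    |lazyA w *ᵥ hvec w A - hvec w A| ≤ α • sqrtDeg w := by
  intro x
  have h := abs_nadj_mulVec_hvec_sub_le hnonneg hdeg hin hout x
  have hhalf : (lazyA w *ᵥ hvec w A - hvec w A) x = (nadj w *ᵥ hvec w A - hvec w A) x / 2 := by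
    simp only [lazyA_mulVec, Pi.add_apply, Pi.sub_apply, Pi.smul_apply, smul_eq_mul]; ring
  simp only [Pi.abs_apply, Pi.smul_apply, smul_eq_mul] at h ⊢
  rw [hhalf, abs_div, abs_two]
  linarith [abs_nonneg ((nadj w *ᵥ hvec w A - hvec w A) x)]

theorem sum_le_of_notMem_cluster (hnonneg : ∀ x x', 0 ≤ w x x') {m : ℕ}
    {C : Fin m → Finset (Fin N)} (hpart : ∀ x : Fin N, ∃! i : Fin m, x ∈ C i) {α : ℝ}
    (hexp : ∀ i : Fin m, ∀ x ∈ C i, (∑ x' ∈ (C i)ᶜ, w x x') ≤ α * deg w x)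
    {i : Fin m} {x : Fin N} (hx : x ∉ C i) : ∑ x' ∈ C i, w x x' ≤ α * deg w x := by
  obtain ⟨j, hj, -⟩ := hpart x
  have hsub : C i ⊆ (C j)ᶜ := fun x' hx' =>
    Finset.mem_compl.2 fun hx'j => hx ((hpart x').unique hx'j hx' ▸ hj)
  exact (Finset.sum_le_sum_of_subset_of_nonneg hsub fun x' _ _ => hnonneg x x').trans (hexp j x hj)

end NormalizedAdjacency

theorem stmt6_general {N m : ℕ} (w : Fin N → Fin N → ℝ)
    (hnonneg : ∀ x x', 0 ≤ w x x')
    (hdeg : ∀ x, 0 < deg w x)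
    (C : Fin m → Finset (Fin N))
    (hpart : ∀ x : Fin N, ∃! i : Fin m, x ∈ C i)
    (α : ℝ)
    (hexp : ∀ i : Fin m, ∀ x ∈ C i, (∑ x' ∈ (C i)ᶜ, w x x') ≤ α * deg w x)
    (i : Fin m) (t : ℕ) :
    (∀ x ∈ C i,
        (1 - (t : ℝ) * α) * Real.sqrt (deg w x) ≤ ((lazyA w ^ t) *ᵥ hvec w (C i)) x ∧
        ((lazyA w ^ t) *ᵥ hvec w (C i)) x ≤ Real.sqrt (deg w x)) ∧
    (∀ x : Fin N, x ∉ C i →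
        0 ≤ ((lazyA w ^ t) *ᵥ hvec w (C i)) x ∧
        ((lazyA w ^ t) *ᵥ hvec w (C i)) x ≤ (t : ℝ) * α * Real.sqrt (deg w x)) := by
  have hM := lazyA_nonneg hnonneg
  have hfix := lazyA_mulVec_sqrtDeg hdeg
  have hrange := pow_mulVec_mem_Icc_of_mulVec_eq_self hM hfix (hvec_mem_Icc (C i)) t
  have hdrift := abs_pow_mulVec_sub_le hM hfix (abs_lazyA_mulVec_hvec_sub_le hnonneg hdeg
    (hexp i) fun x => sum_le_of_notMem_cluster hnonneg hpart hexp) t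
  refine ⟨fun x hx => ⟨?_, hrange.2 x⟩, fun x hx => ⟨hrange.1 x, ?_⟩⟩
  · have hlow := (abs_le.1 (hdrift x)).1
    simp only [Pi.sub_apply, Pi.smul_apply, smul_eq_mul, hvec, if_pos hx, sqrtDeg] at hlow
    linarith
  · simpa only [Pi.sub_apply, Pi.smul_apply, smul_eq_mul, hvec, if_neg hx, sub_zero, sqrtDeg]
      using (abs_le.1 (hdrift x)).2

/-- Entrywise bounds on `((1/2)·I + (1/2)·Ā)^t h_i` for `t·α ≤ 1`. -/
theorem stmt6 {N m : ℕ} (w : Fin N → Fin N → ℝ)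
    (hsymm : ∀ x x', w x x' = w x' x)
    (hnonneg : ∀ x x', 0 ≤ w x x')
    (hsum : ∑ x, ∑ x', w x x' = 1)
    (hdeg : ∀ x, 0 < deg w x)
    (C : Fin m → Finset (Fin N))
    (hpart : ∀ x : Fin N, ∃! i : Fin m, x ∈ C i)
    (hne : ∀ i : Fin m, (C i).Nonempty)
    (α : ℝ) (hα0 : 0 < α) (hα1 : α < 1)
    (hexp : ∀ i : Fin m, ∀ x ∈ C i, (∑ x' ∈ (C i)ᶜ, w x x') ≤ α * deg w x)
    (i : Fin m) (t : ℕ) (ht : (t : ℝ) * α ≤ 1) :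
    (∀ x ∈ C i,
        (1 - (t : ℝ) * α) * Real.sqrt (deg w x) ≤ ((lazyA w ^ t) *ᵥ hvec w (C i)) x ∧
        ((lazyA w ^ t) *ᵥ hvec w (C i)) x ≤ Real.sqrt (deg w x)) ∧
    (∀ x : Fin N, x ∉ C i →
        0 ≤ ((lazyA w ^ t) *ᵥ hvec w (C i)) x ∧
        ((lazyA w ^ t) *ᵥ hvec w (C i)) x ≤ (t : ℝ) * α * Real.sqrt (deg w x)) :=
  stmt6_general w hnonneg hdeg C hpart α hexp i t
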